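/- (Backward reduction preserves the vector field on representatives.) Let (S,R) be a CRN, H a backward CRN bisimulation with choice function μ, and let (Ŝ, R̂) be the backward reduction obtained by: (B1) replacing each reaction ρ→α π with ρ→α π̃ where π̃(X) = π(X) if X ∈ μ(S) and π̃(X) = ρ(X) otherwise; (B2) replacing each resulting reaction ρ→α π with μ(ρ)→α μ(π); (B3) fusing reactions with identical reactants and products by summing rates. If F̂ denotes the mass-action vector field of (Ŝ,R̂) and F that of (S,R), then F_X(V) = F̂_X(V) for all representatives X ∈ μ(S) and all V ∈ ℝ^S_{≥0} that are constant on H. -/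
import Mathlib


open scoped Classical BigOperators

/-- A chemical reaction `ρ →α π`. -/
structure Reaction (S : Type*) where
  reactant : Multiset S
  product  : Multiset S
  rate     : ℝ

variable {S : Type*}

/-- ρ-reaction rate `crr(X,ρ) = (ρ(X)+1) · Σ_{X+ρ →α π ∈ R} α`. -/
noncomputable def crr [DecidableEq S] (Rs : Finset (Reaction S)) (X : S) (ρ : Multiset S) : ℝ :=
  ((ρ.count X : ℝ) + 1) * ∑ r ∈ Rs, if r.reactant = X ::ₘ ρ then r.rate else 0

/-- ρ-production rate `pr(X,ρ,Z) = (ρ(X)+1) · Σ_{X+ρ →α π ∈ R} α·π(Z)`. -/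
noncomputable def pr [DecidableEq S] (Rs : Finset (Reaction S)) (X : S) (ρ : Multiset S) (Z : S) : ℝ :=
  ((ρ.count X : ℝ) + 1) * ∑ r ∈ Rs, if r.reactant = X ::ₘ ρ then r.rate * (r.product.count Z : ℝ) else 0

/-- production rate towards a set of species: `pr(X,ρ,H) = Σ_{Z ∈ H} pr(X,ρ,Z)`. -/
noncomputable def prB [DecidableEq S] [Fintype S] (Rs : Finset (Reaction S)) (X : S) (ρ : Multiset S) (H : Set S) : ℝ :=
  ∑ Z : S, if Z ∈ H then pr Rs X ρ Z else 0

/-- ρ-flux rate `fr(X,ρ) = Σ_{ρ →α π ∈ R} (π(X)−ρ(X))·α`. -/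
noncomputable def fr [DecidableEq S] (Rs : Finset (Reaction S)) (X : S) (ρ : Multiset S) : ℝ :=
  ∑ r ∈ Rs, if r.reactant = ρ then ((r.product.count X : ℝ) - (ρ.count X : ℝ)) * r.rate else 0

/-- cumulative flux rate `fr(X,M) = Σ_{ρ ∈ M} fr(X,ρ)`. -/
noncomputable def frM [DecidableEq S] (Rs : Finset (Reaction S)) (X : S) (M : Finset (Multiset S)) : ℝ :=
  ∑ ρ ∈ M, fr Rs X ρ

/-- mass-action vector field `F_X(V) = Σ_{ρ→α π}(π(X)−ρ(X))·α·Π_Y V_Y^{ρ(Y)}`. -/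
noncomputable def vf [DecidableEq S] [Fintype S] (Rs : Finset (Reaction S)) (V : S → ℝ) (X : S) : ℝ :=
  ∑ r ∈ Rs, ((r.product.count X : ℝ) - (r.reactant.count X : ℝ)) * r.rate * ∏ Y : S, V Y ^ r.reactant.count Y

/-- `μ` is a choice function for the partition induced by the equivalence `e`:
it maps every species to a fixed representative of its block. -/
def IsChoice (e : S → S → Prop) (μ : S → S) : Prop :=
  (∀ X, e X (μ X)) ∧ ∀ X Y, e X Y → μ X = μ Y

/-- forward splitter condition for a pair `(X,Y)` w.r.t. the partition induced by `e`. -/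
def FSplit [DecidableEq S] [Fintype S] (Rs : Finset (Reaction S)) (e : S → S → Prop) (X Y : S) : Prop :=
  ∀ ρ : Multiset S, crr Rs X ρ = crr Rs Y ρ ∧
    ∀ W : S, prB Rs X ρ {Z | e W Z} = prB Rs Y ρ {Z | e W Z}

/-- `e` is a forward CRN bisimulation. -/
def IsFB [DecidableEq S] [Fintype S] (Rs : Finset (Reaction S)) (e : S → S → Prop) : Prop :=
  Equivalence e ∧ ∀ X Y, e X Y → FSplit Rs e X Y

/-- the `≈`-class (w.r.t. the choice function `μ`) of the reactant multiset `ρ0`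
among reactant multisets occurring in `Rs`. -/
noncomputable def reactClass [DecidableEq S] (Rs : Finset (Reaction S)) (μ : S → S) (ρ0 : Multiset S) : Finset (Multiset S) :=
  (Rs.image Reaction.reactant).filter (fun σ => σ.map μ = ρ0.map μ)

/-- backward splitter condition for a pair `(X,Y)` w.r.t. the choice function `μ`. -/
def BSplit [DecidableEq S] (Rs : Finset (Reaction S)) (μ : S → S) (X Y : S) : Prop :=
  ∀ ρ0 ∈ Rs.image Reaction.reactant,
    frM Rs X (reactClass Rs μ ρ0) = frM Rs Y (reactClass Rs μ ρ0)

/-- `e` (with choice function `μ`) is a backward CRN bisimulation. -/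
def IsBB [DecidableEq S] (Rs : Finset (Reaction S)) (e : S → S → Prop) (μ : S → S) : Prop :=
  Equivalence e ∧ IsChoice e μ ∧ ∀ X Y, e X Y → BSplit Rs μ X Y

/-- `V` is constant on the partition induced by `e`. -/
def ConstOn (e : S → S → Prop) (V : S → ℝ) : Prop := ∀ X Y, e X Y → V X = V Y

/-- the sum of `V` over the block of `W`. -/
noncomputable def blockSum [Fintype S] (e : S → S → Prop) (V : S → ℝ) (W : S) : ℝ :=
  ∑ Z : S, if e W Z then V Z else 0

/-- the product multiset `π̃` of step (B1): keep multiplicities of representatives from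
`π`, and of non-representatives from `ρ`. -/
noncomputable def btilde {S : Type*} [Fintype S] [DecidableEq S] (μ : S → S) (r : Reaction S) : Multiset S :=
  ∑ X : S, Multiset.replicate
    (if X ∈ Set.range μ then r.product.count X else r.reactant.count X) X

/-- step (B1): replace `ρ →α π` with `ρ →α π̃`. -/
noncomputable def stepB1 {S : Type*} [Fintype S] [DecidableEq S] (μ : S → S) (r : Reaction S) : Reaction S :=
  ⟨r.reactant, btilde μ r, r.rate⟩

/-- steps (B1)+(B2): replace `ρ →α π` with `μ(ρ) →α μ(π̃)`. -/
noncomputable def reduceReaction {S : Type*} [Fintype S] [DecidableEq S] (μ : S → S) (r : Reaction S) : Reaction S :=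
  ⟨r.reactant.map μ, (btilde μ r).map μ, r.rate⟩

/-- step (B3): fuse reactions with identical reactants and products, summing their rates. -/
noncomputable def fuse {S : Type*} [DecidableEq S] (l : Multiset (Reaction S)) : Finset (Reaction S) :=
  (l.map (fun r => (r.reactant, r.product))).toFinset.image
    (fun p => ⟨p.1, p.2,
      ((l.filter (fun r => r.reactant = p.1 ∧ r.product = p.2)).map Reaction.rate).sum⟩)

/-- mass-action vector field of a multiset of reactions. -/
noncomputable def vfM {S : Type*} [Fintype S] [DecidableEq S] (l : Multiset (Reaction S)) (V : S → ℝ) (X : S) : ℝ :=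
  (l.map (fun r => ((r.product.count X : ℝ) - (r.reactant.count X : ℝ)) * r.rate *
      ∏ Y : S, V Y ^ r.reactant.count Y)).sum

section AuxProof
variable {S : Type*} [Fintype S] [DecidableEq S]

lemma card_eq_sum_count_univ (m : Multiset S) :
    Multiset.card m = ∑ Y : S, m.count Y := by
  rw [← Multiset.toFinset_sum_count_eq]
  exact Finset.sum_subset (Finset.subset_univ _) fun x _ hx =>
    Multiset.count_eq_zero.mpr fun h => hx (Multiset.mem_toFinset.mpr h)

lemma count_map_eq (μ : S → S) (m : Multiset S) (X : S) :
    (m.map μ).count X = ∑ Y : S, if μ Y = X then m.count Y else 0 := by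
  rw [Multiset.count_map, card_eq_sum_count_univ]
  refine Finset.sum_congr rfl fun Y _ => ?_
  rw [Multiset.count_filter]
  simp [eq_comm]

lemma count_btilde (μ : S → S) (r : Reaction S) (Y : S) :
    (btilde μ r).count Y =
      if Y ∈ Set.range μ then r.product.count Y else r.reactant.count Y := by
  rw [btilde, Multiset.count_sum']
  simp [Multiset.count_replicate]

lemma prod_pow_count (V : S → ℝ) (m : Multiset S) :
    ∏ Y : S, V Y ^ m.count Y = (m.map V).prod := by
  rw [Finset.prod_multiset_map_count]
  exact (Finset.prod_subset (Finset.subset_univ _) fun x _ hx => by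
    rw [Multiset.count_eq_zero.mpr fun h => hx (Multiset.mem_toFinset.mpr h), pow_zero]).symm

lemma mon_map (V : S → ℝ) (μ : S → S) (hVμ : ∀ Y, V (μ Y) = V Y) (m : Multiset S) :
    ∏ Y : S, V Y ^ (m.map μ).count Y = ∏ Y : S, V Y ^ m.count Y := by
  rw [prod_pow_count, prod_pow_count, Multiset.map_map]
  congr 1
  exact Multiset.map_congr rfl fun x _ => hVμ x

lemma coeff_reduce (μ : S → S) (hfix : ∀ Y ∈ Set.range μ, μ Y = Y) (r : Reaction S)
    (X : S) (hX : X ∈ Set.range μ) :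
    (((btilde μ r).map μ).count X : ℝ) - ((r.reactant.map μ).count X : ℝ)
      = (r.product.count X : ℝ) - (r.reactant.count X : ℝ) := by
  rw [count_map_eq, count_map_eq]
  push_cast
  rw [← Finset.sum_sub_distrib, Finset.sum_eq_single X ?h0 (by simp)]
  · rw [if_pos (hfix X hX), if_pos (hfix X hX), count_btilde, if_pos hX]
  case h0 =>
    intro Y _ hYX
    by_cases h : μ Y = X
    · have hYr : Y ∉ Set.range μ := fun hYr => hYX (by rw [← hfix Y hYr, h])
      rw [if_pos h, if_pos h, count_btilde, if_neg hYr, sub_self]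
    · rw [if_neg h, if_neg h, sub_self]

lemma sum_fuse {S : Type*} [DecidableEq S] (l : Multiset (Reaction S)) (f : Reaction S → ℝ)
    (c : Multiset S × Multiset S → ℝ)
    (hf : ∀ r, f r = c (r.reactant, r.product) * r.rate) :
    ∑ r ∈ fuse l, f r = (l.map f).sum := by
  classical
  set key : Reaction S → Multiset S × Multiset S := fun r => (r.reactant, r.product) with hkey
  have hfilter : ∀ p : Multiset S × Multiset S,
      (l.filter fun r => r.reactant = p.1 ∧ r.product = p.2) = l.filter fun r => key r = p := by
    intro p
    refine Multiset.filter_congr fun r _ => ?_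
    simp [hkey, Prod.ext_iff]
  rw [fuse, Finset.sum_image (fun p _ q _ h =>
    Prod.ext (congrArg Reaction.reactant h) (congrArg Reaction.product h))]
  calc ∑ p ∈ (l.map key).toFinset,
        f ⟨p.1, p.2, ((l.filter fun r => r.reactant = p.1 ∧ r.product = p.2).map Reaction.rate).sum⟩
      = ∑ p ∈ (l.map key).toFinset,
          c p * ((l.filter fun r => key r = p).map Reaction.rate).sum := by
        refine Finset.sum_congr rfl fun p hp => ?_
        rw [hf, hfilter p]
    _ = ∑ p ∈ (l.map key).toFinset, ∑ r ∈ l.toFinset.filter (fun r => key r = p),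
          c (key r) * ((l.count r : ℝ) * r.rate) := by
        refine Finset.sum_congr rfl fun p hp => ?_
        rw [Finset.sum_multiset_map_count, Multiset.toFinset_filter, Finset.mul_sum]
        refine Finset.sum_congr rfl fun r hr => ?_
        obtain ⟨_, hkr⟩ := Finset.mem_filter.mp hr
        rw [Multiset.count_filter, if_pos hkr, hkr, nsmul_eq_mul]
    _ = ∑ r ∈ l.toFinset, c (key r) * ((l.count r : ℝ) * r.rate) :=
        Finset.sum_fiberwise_of_maps_to (fun r hr => Multiset.mem_toFinset.mpr
          (Multiset.mem_map_of_mem key (Multiset.mem_toFinset.mp hr))) _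
    _ = (l.map f).sum := by
        rw [Finset.sum_multiset_map_count]
        refine Finset.sum_congr rfl fun r hr => ?_
        rw [nsmul_eq_mul, hf]
        ring

lemma vf_fuse {S : Type*} [Fintype S] [DecidableEq S] (V : S → ℝ) (X : S) (l : Multiset (Reaction S)) :
    vf (fuse l) V X = vfM l V X := by
  rw [vf, vfM]
  exact sum_fuse l _
    (fun p => ((p.2.count X : ℝ) - (p.1.count X : ℝ)) * ∏ Y : S, V Y ^ p.1.count Y)
    (fun r => by ring)

end AuxProof

/-- The backward reduction (steps (B1),(B2),(B3)) preserves the vector field on the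
representatives at every nonnegative point constant on the partition. -/
theorem stmt12 {S : Type*} [Fintype S] [DecidableEq S]
    (Rs : Finset (Reaction S)) (hpos : ∀ r ∈ Rs, 0 < r.rate)
    (e : S → S → Prop) (μ : S → S) (hbb : IsBB Rs e μ)
    (X : S) (hX : X ∈ Set.range μ)
    (V : S → ℝ) (hV : ∀ Y, 0 ≤ V Y) (hconst : ConstOn e V) :
    vf Rs V X = vf (fuse (Rs.val.map (reduceReaction μ))) V X := by
  obtain ⟨he, hch, _⟩ := hbb
  have hfix : ∀ Y ∈ Set.range μ, μ Y = Y := by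
    rintro _ ⟨Z, rfl⟩; exact (hch.2 Z (μ Z) (hch.1 Z)).symm
  have hVμ : ∀ Y, V (μ Y) = V Y := fun Y => (hconst Y (μ Y) (hch.1 Y)).symm
  rw [vf_fuse, vf, vfM, Finset.sum, Multiset.map_map]
  congr 1
  refine Multiset.map_congr rfl fun r _ => ?_
  simp only [Function.comp_apply, reduceReaction]
  rw [mon_map V μ hVμ, coeff_reduce μ hfix r X hX]
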